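/- The variety SUB_2 is locally finite: every lattice that is generated by finitely many elements and embeds into Co(P) for some poset P of length at most 2 is finite. -/

import Mathlib

/-! Common definitions: lattices of order-convex subsets of a poset,
length of a poset, the identities (S), (U), (B), (L2), (H_n), (H_{m,n}),
join-irreducibility, the join-dependency relation, join-seeds,
the posets P_{I,J}, tree-like posets, D-closed sets,
and complete lattice congruences. -/

open Set

/-- The lattice `Co P` of all order-convex subsets of a poset `P`. -/
def Co (P : Type*) [PartialOrder P] : Type _ := {s : Set P // s.OrdConnected}

namespace Co

variable {P : Type*} [PartialOrder P]

instance : PartialOrder (Co P) := Subtype.partialOrder _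

instance : InfSet (Co P) :=
  ⟨fun S => ⟨⋂ s ∈ S, s.1, Set.ordConnected_biInter fun s _ => s.2⟩⟩

noncomputable instance : CompleteLattice (Co P) :=
  completeLatticeOfInf (Co P) (by
    intro S
    constructor
    · intro t ht
      exact Set.biInter_subset_of_mem (t := fun s => s.1) ht
    · intro b hb
      exact Set.subset_iInter₂ fun t ht => hb ht)

/-- The order-convex subset of `P` with underlying set `X`. -/
def mk' (X : Set P) (hX : X.OrdConnected) : Co P := ⟨X, hX⟩

/-- The singleton `{p}`, as an order-convex set. -/
def sngl (p : P) : Co P := ⟨{p}, Set.ordConnected_singleton⟩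

/-- The empty order-convex set. -/
def emp : Co P := ⟨∅, Set.ordConnected_empty⟩

end Co

/-- `lengthLE P n` states that the poset `P` has length at most `n`, that is,
every finite chain of `P` has at most `n + 1` elements. -/
def lengthLE (P : Type*) [PartialOrder P] (n : ℕ) : Prop :=
  ∀ C : Finset P, IsChain (· ≤ ·) (C : Set P) → C.card ≤ n + 1

section Identities

/-- The Stirlitz identity (S). -/
def IdS (L : Type*) [Lattice L] : Prop :=
  ∀ a b b₀ b₁ c : L,
    a ⊓ ((b ⊓ (b₀ ⊔ b₁)) ⊔ c) =
      (a ⊓ (b ⊓ (b₀ ⊔ b₁)))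
      ⊔ (a ⊓ (b₀ ⊔ c) ⊓ ((b ⊓ (b₀ ⊔ b₁) ⊓ (a ⊔ b₀)) ⊔ c))
      ⊔ (a ⊓ (b₁ ⊔ c) ⊓ ((b ⊓ (b₀ ⊔ b₁) ⊓ (a ⊔ b₁)) ⊔ c))

/-- The Udav identity (U). -/
def IdU (L : Type*) [Lattice L] : Prop :=
  ∀ x x₀ x₁ x₂ : L,
    x ⊓ (x₀ ⊔ x₁) ⊓ (x₁ ⊔ x₂) ⊓ (x₀ ⊔ x₂) =
      (x ⊓ x₀ ⊓ (x₁ ⊔ x₂)) ⊔ (x ⊓ x₁ ⊓ (x₀ ⊔ x₂)) ⊔ (x ⊓ x₂ ⊓ (x₀ ⊔ x₁))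

/-- The Bond identity (B). -/
def IdB (L : Type*) [Lattice L] : Prop :=
  ∀ x a₀ a₁ b₀ b₁ : L,
    x ⊓ (a₀ ⊔ a₁) ⊓ (b₀ ⊔ b₁) =
      (x ⊓ a₀ ⊓ (b₀ ⊔ b₁)) ⊔ (x ⊓ a₁ ⊓ (b₀ ⊔ b₁))
      ⊔ (x ⊓ b₀ ⊓ (a₀ ⊔ a₁)) ⊔ (x ⊓ b₁ ⊓ (a₀ ⊔ a₁))
      ⊔ (x ⊓ (a₀ ⊔ a₁) ⊓ (b₀ ⊔ b₁) ⊓ (a₀ ⊔ b₀) ⊓ (a₁ ⊔ b₁))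
      ⊔ (x ⊓ (a₀ ⊔ a₁) ⊓ (b₀ ⊔ b₁) ⊓ (a₀ ⊔ b₁) ⊓ (a₁ ⊔ b₀))

/-- The identity (L₂). -/
def IdL2 (L : Type*) [Lattice L] : Prop :=
  ∀ a b b' c c' : L,
    a ⊓ ((b ⊓ (c ⊔ c')) ⊔ b') =
      (a ⊓ b ⊓ (c ⊔ c')) ⊔ (a ⊓ ((b ⊓ c) ⊔ b')) ⊔ (a ⊓ ((b ⊓ c') ⊔ b'))

variable {L : Type*} [Lattice L]

/-- The lattice polynomial `U_{i,n}` (in the variables `x₀, …, xₙ, x'₁, …, x'ₙ`). -/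
def Upoly (x x' : ℕ → L) (n : ℕ) (i : ℕ) : L :=
  if h : n ≤ i then x n
  else x i ⊓ (Upoly x x' n (i + 1) ⊔ x' (i + 1))
  termination_by n - i
  decreasing_by omega

/-- The lattice polynomial `V_{i,j,n}`. -/
def Vpoly (x x' : ℕ → L) (n i : ℕ) (j : ℕ) : L :=
  if h : i ≤ j then (x i ⊓ Upoly x x' n (i + 1)) ⊔ (x i ⊓ x' (i + 1))
  else x j ⊓ (Vpoly x x' n i (j + 1) ⊔ x' (j + 1))
  termination_by i - j
  decreasing_by omega

/-- The lattice polynomial `W_{i,j,n}`. -/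
def Wpoly (x x' : ℕ → L) (n i : ℕ) (j : ℕ) : L :=
  if h : i ≤ j then
    x i ⊓ (x' (i + 1) ⊔ x' (i + 2)) ⊓ ((Upoly x x' n (i + 1) ⊓ (x i ⊔ x' (i + 2))) ⊔ x' (i + 1))
  else x j ⊓ (Wpoly x x' n i (j + 1) ⊔ x' (j + 1))
  termination_by i - j
  decreasing_by omega

/-- `bigJoin f k = f 0 ⊔ f 1 ⊔ ⋯ ⊔ f k`. -/
def bigJoin (f : ℕ → L) : ℕ → L
  | 0 => f 0
  | k + 1 => bigJoin f k ⊔ f (k + 1)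

end Identities

/-- The identity (Hₙ) : `Uₙ = ⋁_{0 ≤ i ≤ n-1} V_{i,n} ∨ ⋁_{0 ≤ i ≤ n-2} W_{i,n}`
(intended for `n ≥ 1`). -/
def IdH (n : ℕ) (L : Type*) [Lattice L] : Prop :=
  ∀ x x' : ℕ → L,
    Upoly x x' n 0 =
      bigJoin (fun i =>
        if i + 2 ≤ n then Vpoly x x' n i 0 ⊔ Wpoly x x' n i 0 else Vpoly x x' n i 0) (n - 1)

/-- The identity (H_{m,n}) (intended for `m, n ≥ 1`); the common base point is
`x 0 = y 0 = t`. -/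
def IdHmn (m n : ℕ) (L : Type*) [Lattice L] : Prop :=
  ∀ x x' y y' : ℕ → L, x 0 = y 0 →
    Upoly x x' m 0 ⊓ Upoly y y' n 0 =
      bigJoin (fun i =>
          if i + 2 ≤ m then
            (Vpoly x x' m i 0 ⊓ Upoly y y' n 0) ⊔ (Wpoly x x' m i 0 ⊓ Upoly y y' n 0)
          else Vpoly x x' m i 0 ⊓ Upoly y y' n 0) (m - 1)
      ⊔ bigJoin (fun j =>
          if j + 2 ≤ n then
            (Upoly x x' m 0 ⊓ Vpoly y y' n j 0) ⊔ (Upoly x x' m 0 ⊓ Wpoly y y' n j 0)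
          else Upoly x x' m 0 ⊓ Vpoly y y' n j 0) (n - 1)
      ⊔ (Upoly x x' m 0 ⊓ Upoly y y' n 0 ⊓ (x 1 ⊔ y' 1) ⊓ (x' 1 ⊔ y 1))

/-- `p` is join-irreducible: `p = x ⊔ y` implies `p = x` or `p = y`. -/
def JIrr {L : Type*} [Lattice L] (p : L) : Prop :=
  ∀ x y : L, p = x ⊔ y → p = x ∨ p = y

/-- The join-dependency relation `p D q`. -/
def DRel {L : Type*} [Lattice L] (p q : L) : Prop :=
  p ≠ q ∧ ∃ x : L, p ≤ q ⊔ x ∧ ∀ y < q, ¬ p ≤ y ⊔ x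

/-- A subset `S` of a lattice `L` is a join-seed. -/
def JoinSeed (L : Type*) [Lattice L] (S : Set L) : Prop :=
  (∀ p ∈ S, JIrr p) ∧
  (∀ a : L, ∃ T ⊆ S, IsLUB T a) ∧
  (∀ p ∈ S, ∀ a b : L, p ≤ a ⊔ b → ¬ p ≤ a → ¬ p ≤ b →
    ∃ x ∈ S, ∃ y ∈ S, x ≤ a ∧ y ≤ b ∧ p ≤ x ⊔ y ∧
      (∀ x' < x, ¬ p ≤ x' ⊔ y) ∧ (∀ y' < y, ¬ p ≤ x ⊔ y'))

/-- The poset `P_{I,J} = I ∪ {p} ∪ J`, where every element of `I` is below `p`,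
`p` is below every element of `J`, every element of `I` is below every element
of `J`, and there are no other strict comparabilities. -/
def PIJ (I J : Type*) : Type _ := I ⊕ (Unit ⊕ J)

namespace PIJ

variable {I J : Type*}

/-- The rank (height) of an element of `P_{I,J}`. -/
def rank (a : PIJ I J) : ℕ :=
  Sum.elim (fun _ => 0) (Sum.elim (fun _ => 1) fun _ => 2) a

instance : PartialOrder (PIJ I J) where
  le a b := a = b ∨ rank a < rank b
  le_refl a := Or.inl rfl
  le_trans a b c hab hbc := by
    rcases hab with rfl | h
    · exact hbc
    · rcases hbc with rfl | h'
      · exact Or.inr h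
      · exact Or.inr (h.trans h')
  le_antisymm a b hab hba := by
    rcases hab with rfl | h
    · rfl
    · rcases hba with rfl | h'
      · rfl
      · omega

end PIJ

/-- A poset is tree-like if it has no infinite bounded chain and between any two
points there is at most one repetition-free finite path with respect to the
covering relation. -/
def TreeLike (P : Type*) [PartialOrder P] : Prop :=
  (∀ C : Set P, IsChain (· ≤ ·) C → BddAbove C → BddBelow C → C.Finite) ∧
  (∀ a b : P, ∀ l₁ l₂ : List P,
    l₁.Nodup → l₁.head? = some a → l₁.getLast? = some b →
      l₁.Chain' (fun u v => u ⋖ v ∨ v ⋖ u) →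
    l₂.Nodup → l₂.head? = some a → l₂.getLast? = some b →
      l₂.Chain' (fun u v => u ⋖ v ∨ v ⋖ u) →
    l₁ = l₂)

/-- A subset `U` of a poset `P` is `D`-closed. -/
def DClosed {P : Type*} [PartialOrder P] (U : Set P) : Prop :=
  ∀ x p y : P, x < p → p < y → (x ∈ U ∨ y ∈ U) → p ∈ U

/-- A complete congruence of a complete lattice. -/
structure IsCompleteCongr {L : Type*} [CompleteLattice L] (θ : L → L → Prop) : Prop where
  refl : ∀ x, θ x x
  symm : ∀ {x y}, θ x y → θ y x
  trans : ∀ {x y z}, θ x y → θ y z → θ x z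
  sup : ∀ {a b c d}, θ a b → θ c d → θ (a ⊔ c) (b ⊔ d)
  inf : ∀ {a b c d}, θ a b → θ c d → θ (a ⊓ c) (b ⊓ d)
  cSup : ∀ (x : L) (Y : Set L), Y.Nonempty → (∀ y ∈ Y, θ x y) → θ x (sSup Y)
  cInf : ∀ (x : L) (Y : Set L), Y.Nonempty → (∀ y ∈ Y, θ x y) → θ x (sInf Y)

/-- The map `h_U : Co(P) → Co(P ∖ U)`, `X ↦ X ∖ U`. -/
def coRestrict {P : Type*} [PartialOrder P] (U : Set P) (X : Co P) :
    Co {p : P // p ∉ U} :=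
  ⟨Subtype.val ⁻¹' X.1, by
    constructor
    rintro a ha b hb z hz
    exact X.2.out ha hb ⟨hz.1, hz.2⟩⟩

/-- The lattice `D(P)` of all `D`-closed subsets of a poset `P`. -/
def DSub (P : Type*) [PartialOrder P] : Type _ := {U : Set P // DClosed U}

namespace DSub

variable {P : Type*} [PartialOrder P]

instance : PartialOrder (DSub P) := Subtype.partialOrder _

instance : InfSet (DSub P) :=
  ⟨fun S => ⟨⋂ U ∈ S, U.1, by
    intro x p y h1 h2 h3
    simp only [Set.mem_iInter] at h3 ⊢
    intro U hU
    exact U.2 x p y h1 h2 (h3.imp (fun h => h U hU) fun h => h U hU)⟩⟩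

noncomputable instance : CompleteLattice (DSub P) :=
  completeLatticeOfInf (DSub P) (by
    intro S
    constructor
    · intro t ht
      exact Set.biInter_subset_of_mem (t := fun U => U.1) ht
    · intro b hb
      exact Set.subset_iInter₂ fun t ht => hb ht)

end DSub

/-! In a poset of length at most 2, the join `X ⊔ Y` of order-convex sets adds to `X ∪ Y` exactly
the middle points `p` of chains `x < p < y` with `x, y ∈ X ∪ Y`, and the end points of such a
chain are the middle point of no chain. Let the trace `t p` record which generators contain `p`.
The profile `p ↦ (t p, {(t x, t y) | x < p < y})` of an end point is then determined by its
trace, so by induction every element of the generated sublattice is a union of fibres of the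
profile. The profile takes finitely many values, hence there are finitely many such unions. -/

theorem lengthLE.not_lt_lt_lt {P : Type*} [PartialOrder P] (hlen : lengthLE P 2) {a b c d : P}
    (hab : a < b) (hbc : b < c) (hcd : c < d) : False := by
  classical
  have hchain : IsChain (· ≤ ·) (({a, b, c, d} : Finset P) : Set P) := by
    simp only [Finset.coe_insert, Finset.coe_singleton]
    refine ((Set.subsingleton_singleton.isChain.insert ?_).insert ?_).insert ?_ <;>
      simp [hab.le, hbc.le, hcd.le, (hab.trans hbc).le, (hbc.trans hcd).le,
        (hab.trans (hbc.trans hcd)).le]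
  have hcard : ({a, b, c, d} : Finset P).card = 4 :=
    Finset.card_eq_four.2 ⟨a, b, c, d, by order, by order, by order, by order, by order, by order, rfl⟩
  have := hlen _ hchain
  omega

namespace Co

variable {P : Type*} [PartialOrder P]

theorem coe_inf (X Y : Co P) : (X ⊓ Y).1 = X.1 ∩ Y.1 := by
  show ⋂ s ∈ ({X, Y} : Set (Co P)), s.1 = _
  simp

theorem mem_sup {X Y : Co P} {p : P} :
    p ∈ (X ⊔ Y).1 ↔ ∃ x ∈ X.1 ∪ Y.1, ∃ y ∈ X.1 ∪ Y.1, x ≤ p ∧ p ≤ y := by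
  let H : Co P := ⟨{p | ∃ x ∈ X.1 ∪ Y.1, ∃ y ∈ X.1 ∪ Y.1, x ≤ p ∧ p ≤ y}, ⟨by
    rintro a ⟨x, hx, -, -, hxa, -⟩ b ⟨-, -, y, hy, -, hby⟩ p ⟨hap, hpb⟩
    exact ⟨x, hx, y, hy, hxa.trans hap, hpb.trans hby⟩⟩⟩
  have hle : X ⊔ Y ≤ H :=
    sup_le (fun p hp => ⟨p, .inl hp, p, .inl hp, le_rfl, le_rfl⟩)
      (fun p hp => ⟨p, .inr hp, p, .inr hp, le_rfl, le_rfl⟩)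
  have hunion : X.1 ∪ Y.1 ⊆ (X ⊔ Y).1 :=
    Set.union_subset (le_sup_left (a := X) (b := Y)) (le_sup_right (a := X) (b := Y))
  refine ⟨fun hp => hle hp, fun ⟨x, hx, y, hy, hxp, hpy⟩ => ?_⟩
  exact (X ⊔ Y).2.out (hunion hx) (hunion hy) ⟨hxp, hpy⟩

end Co

section Saturated

variable {α κ : Type*}

def IsSaturated (c : α → κ) (s : Set α) : Prop :=
  ∀ ⦃a b⦄, c a = c b → a ∈ s → b ∈ s

theorem IsSaturated.union {c : α → κ} {s t : Set α} (hs : IsSaturated c s)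
    (ht : IsSaturated c t) : IsSaturated c (s ∪ t) :=
  fun _ _ hab => Or.imp (hs hab) (ht hab)

theorem finite_setOf_isSaturated [Finite κ] (c : α → κ) : {s | IsSaturated c s}.Finite :=
  (Set.finite_range (Set.preimage c)).subset fun s hs =>
    ⟨c '' s, Set.ext fun _ => ⟨fun ⟨_, ha, hab⟩ => hs hab ha, fun hb => ⟨_, hb, rfl⟩⟩⟩

end Saturated

section Profile

variable {P τ : Type*} [PartialOrder P]

def profile (t : P → τ) (p : P) : τ × Set (τ × τ) :=
  (t p, {uv | ∃ x y, x < p ∧ p < y ∧ (t x, t y) = uv})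

theorem profile_eq_of_lt_of_lt (hlen : lengthLE P 2) (t : P → τ) {x p y : P} (hxp : x < p)
    (hpy : p < y) : profile t x = (t x, ∅) ∧ profile t y = (t y, ∅) := by
  refine ⟨?_, ?_⟩ <;> refine Prod.ext rfl (Set.eq_empty_of_forall_notMem ?_)
  · rintro _ ⟨x', -, hx'x, -, -⟩
    exact hlen.not_lt_lt_lt hx'x hxp hpy
  · rintro _ ⟨-, y', -, hyy', -⟩
    exact hlen.not_lt_lt_lt hxp hpy hyy'

theorem Co.isSaturated_profile_sup (hlen : lengthLE P 2) (t : P → τ) {X Y : Co P}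
    (hX : IsSaturated (profile t) X.1) (hY : IsSaturated (profile t) Y.1) :
    IsSaturated (profile t) (X ⊔ Y).1 := by
  have hXY := hX.union hY
  intro p q hpq hp
  obtain ⟨x, hx, y, hy, hxp, hpy⟩ := Co.mem_sup.1 hp
  rcases hxp.eq_or_lt with rfl | hxp
  · exact Co.mem_sup.2 ⟨q, hXY hpq hx, q, hXY hpq hx, le_rfl, le_rfl⟩
  rcases hpy.eq_or_lt with rfl | hpy
  · exact Co.mem_sup.2 ⟨q, hXY hpq hy, q, hXY hpq hy, le_rfl, le_rfl⟩
  obtain ⟨x', y', hx'q, hqy', htxy⟩ : (t x, t y) ∈ (profile t q).2 :=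
    hpq ▸ ⟨x, y, hxp, hpy, rfl⟩
  obtain ⟨htx, hty⟩ := Prod.mk.inj htxy
  obtain ⟨hx₀, hy₀⟩ := profile_eq_of_lt_of_lt hlen t hxp hpy
  obtain ⟨hx'₀, hy'₀⟩ := profile_eq_of_lt_of_lt hlen t hx'q hqy'
  refine Co.mem_sup.2 ⟨x', hXY ?_ hx, y', hXY ?_ hy, hx'q.le, hqy'.le⟩
  · rw [hx₀, hx'₀, htx]
  · rw [hy₀, hy'₀, hty]

theorem Co.finite_latticeClosure (hlen : lengthLE P 2) {G : Set (Co P)} (hG : G.Finite) :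
    (latticeClosure G).Finite := by
  have := hG.to_subtype
  let t : P → G → Prop := fun p X => p ∈ X.1.1
  have hsat : latticeClosure G ⊆ {X | IsSaturated (profile t) X.1} := by
    refine latticeClosure_min (fun X hX p q hpq => ?_) ⟨fun X hX Y hY => ?_, fun X hX Y hY => ?_⟩
    · exact (congrFun (congrArg Prod.fst hpq) ⟨X, hX⟩).mp
    · exact Co.isSaturated_profile_sup hlen t hX hY
    · intro p q hpq hp
      rw [Co.coe_inf] at hp ⊢
      exact ⟨hX hpq hp.1, hY hpq hp.2⟩
  exact ((finite_setOf_isSaturated (profile t)).preimage Subtype.val_injective.injOn).subset hsat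

end Profile

theorem stmt4.{u} (L : Type u) [Lattice L]
    (hgen : ∃ s : Finset L, latticeClosure (↑s : Set L) = Set.univ)
    (hsub : ∃ (P : Type u) (_ : PartialOrder P), lengthLE P 2 ∧
      ∃ f : LatticeHom L (Co P), Function.Injective f) :
    Finite L := by
  obtain ⟨s, hs⟩ := hgen
  obtain ⟨P, _, hlen, f, hf⟩ := hsub
  have hrange : Set.range f = latticeClosure (f '' s) := by
    rw [← Set.image_univ, ← hs, image_latticeClosure _ _ (map_sup f) (map_inf f)]
  have : Finite (Set.range f) := by
    rw [hrange]
    exact (Co.finite_latticeClosure hlen (s.finite_toSet.image f)).to_subtype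
  exact Finite.of_injective_finite_range hf
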